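/- Let N ≥ 2, u ∈ (0,1), Γ ∈ (0,1), P_f, P_m ∈ [0,1] with P_f + P_m ≠ 1, and define the quadratic form Ṽ(w̃) = ((u·P_m(1−P_m) + (1−u)·P_f(1−P_f))/(1−P_f−P_m)²)·∑_{i=1}^{N} w̃_i² + u(1−u)·(∑_{i=1}^{N} w̃_i² + 2·∑_{j=1}^{N−1} Γ^{j}·∑_{i=1}^{N−j} w̃_i w̃_{i+j}) on weights summing to 1. Then at the weights w̃* given by w̃*_1 = w̃*_N = 1/(N(1−Γ)+2Γ) and w̃*_i = (1−Γ)/(N(1−Γ)+2Γ) for 1 < i < N, the value is Ṽ(w̃*) = u(1−u)(1+Γ)/(N(1−Γ)+2Γ) + ((u·P_m(1−P_m) + (1−u)·P_f(1−P_f))/(1−P_f−P_m)²)·(2 + (N−2)(1−Γ)²)/((N(1−Γ)+2Γ)²). -/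

import Mathlib

/-!
Write `D = N(1-Γ) + 2Γ` and `w̃* = v / D`, where `v` has ends `1` and interior entries `1-Γ`.
The correlation part of `Ṽ` is the AR(1) form `vᵀ Σ v` with `Σᵢₖ = Γ^|i-k|`, and `v` is the
vector with `Σ v = (1+Γ) 𝟙`, so `vᵀ Σ v = (1+Γ) ∑ vᵢ = (1+Γ) D`. In the lag form used by `Ṽ`
this is an identity between sums over lags that reduces to a geometric sum.
-/

open Finset

/-- Mean squared error of the bias-corrected weighted averaging duty-cycle
estimator under sensing errors, as a quadratic form in the weights
`w 0, …, w (N-1)` (0-based; the paper's `w̃_i` is `w (i-1)`). -/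
noncomputable def Vtilde (u Γ Pf Pm : ℝ) (N : ℕ) (w : ℕ → ℝ) : ℝ :=
  (u * Pm * (1 - Pm) + (1 - u) * Pf * (1 - Pf)) / (1 - Pf - Pm) ^ 2 *
      ∑ i ∈ Finset.range N, w i ^ 2
    + u * (1 - u) *
        (∑ i ∈ Finset.range N, w i ^ 2
          + 2 * ∑ j ∈ Finset.Icc 1 (N - 1), Γ ^ j *
              ∑ i ∈ Finset.range (N - j), w i * w (i + j))

/-- The optimal weighting sequence: the first and last weights are
`1/(N(1-Γ)+2Γ)`, the others `(1-Γ)/(N(1-Γ)+2Γ)`. -/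
noncomputable def wstar (Γ : ℝ) (N : ℕ) (i : ℕ) : ℝ :=
  if i = 0 ∨ i = N - 1 then 1 / ((N : ℝ) * (1 - Γ) + 2 * Γ)
  else (1 - Γ) / ((N : ℝ) * (1 - Γ) + 2 * Γ)

theorem sum_range_add_two_of_interior_const {R : Type*} [CommSemiring R] (f : ℕ → R) {m : ℕ} {b : R}
    (h : ∀ i < m, f (i + 1) = b) :
    ∑ i ∈ range (m + 2), f i = f 0 + m * b + f (m + 1) := by
  rw [sum_range_succ, sum_range_succ', sum_congr rfl fun i hi => h i (mem_range.1 hi), sum_const,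
    card_range, nsmul_eq_mul]
  ring

section EndsInterior

variable {R : Type*} [CommRing R] {w : ℕ → R} {m : ℕ} {a b : R}

theorem sum_range_sq_of_ends_interior (h0 : w 0 = a) (hlast : w (m + 1) = a)
    (hint : ∀ i, 0 < i → i ≤ m → w i = b) :
    ∑ i ∈ range (m + 2), w i ^ 2 = 2 * a ^ 2 + m * b ^ 2 := by
  have hinner : ∀ i < m, w (i + 1) ^ 2 = b ^ 2 := fun i hi => by
    rw [hint (i + 1) (by omega) (by omega)]
  rw [sum_range_add_two_of_interior_const _ hinner, h0, hlast]
  ring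

theorem lagSum_of_ends_interior (h0 : w 0 = a) (hlast : w (m + 1) = a)
    (hint : ∀ i, 0 < i → i ≤ m → w i = b) {j : ℕ} (hj : 1 ≤ j) (hjm : j ≤ m) :
    ∑ i ∈ range (m + 2 - j), w i * w (i + j) = 2 * (a * b) + ((m : R) - j) * b ^ 2 := by
  obtain ⟨k, rfl⟩ : ∃ k, m = k + j := ⟨m - j, by omega⟩
  have hinner : ∀ i < k, w (i + 1) * w (i + 1 + j) = b ^ 2 := fun i hi => by
    rw [hint (i + 1) (by omega) (by omega), hint (i + 1 + j) (by omega) (by omega), sq]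
  rw [show k + j + 2 - j = k + 2 by omega, sum_range_add_two_of_interior_const _ hinner,
    zero_add, h0, show k + 1 + j = k + j + 1 by omega, hlast, hint j (by omega) (by omega),
    hint (k + 1) (by omega) (by omega)]
  push_cast
  ring

theorem lagCorrelation_of_ends_interior (Γ : R) (h0 : w 0 = a) (hlast : w (m + 1) = a)
    (hint : ∀ i, 0 < i → i ≤ m → w i = b) :
    ∑ j ∈ Icc 1 (m + 2 - 1), Γ ^ j * ∑ i ∈ range (m + 2 - j), w i * w (i + j)
      = Γ ^ (m + 1) * a ^ 2
        + ∑ j ∈ Icc 1 m, Γ ^ j * (2 * (a * b) + ((m : R) - j) * b ^ 2) := by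
  have hlags : ∀ j ∈ Icc 1 m, Γ ^ j * ∑ i ∈ range (m + 2 - j), w i * w (i + j)
      = Γ ^ j * (2 * (a * b) + ((m : R) - j) * b ^ 2) := fun j hj => by
    rw [lagSum_of_ends_interior h0 hlast hint (mem_Icc.1 hj).1 (mem_Icc.1 hj).2]
  rw [show m + 2 - 1 = m + 1 from rfl, sum_Icc_succ_top (by omega), sum_congr rfl hlags,
    show m + 2 - (m + 1) = 1 by omega, sum_range_one, zero_add, h0, hlast]
  ring

end EndsInterior

section Geometric

variable {R : Type*} [CommRing R]

theorem one_sub_mul_sum_Icc_pow (Γ : R) (m : ℕ) :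
    (1 - Γ) * ∑ j ∈ Icc 1 m, Γ ^ j = Γ - Γ ^ (m + 1) := by
  rw [← Ico_add_one_right_eq_Icc, mul_comm, geom_sum_Ico_mul_neg _ (by omega), pow_one]

theorem pow_add_sum_Icc_lag_weights (Γ : R) (m : ℕ) :
    Γ ^ (m + 1) + ∑ j ∈ Icc 1 m, Γ ^ j * (2 * (1 - Γ) + ((m : R) - j) * (1 - Γ) ^ 2)
      = m * Γ * (1 - Γ) + Γ := by
  induction m with
  | zero => simp
  | succ m ih =>
    have hshift : ∑ j ∈ Icc 1 m, Γ ^ j * (2 * (1 - Γ) + (((m + 1 : ℕ) : R) - j) * (1 - Γ) ^ 2)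
        = ∑ j ∈ Icc 1 m, Γ ^ j * (2 * (1 - Γ) + ((m : R) - j) * (1 - Γ) ^ 2)
          + (1 - Γ) * ((1 - Γ) * ∑ j ∈ Icc 1 m, Γ ^ j) := by
      rw [mul_sum, mul_sum, ← sum_add_distrib]
      refine sum_congr rfl fun j _ => ?_
      push_cast
      ring
    rw [sum_Icc_succ_top (by omega), hshift, one_sub_mul_sum_Icc_pow]
    push_cast
    linear_combination ih

theorem lagCorrelation_of_geometric_profile (Γ a : R) (m : ℕ) :
    Γ ^ (m + 1) * a ^ 2
        + ∑ j ∈ Icc 1 m, Γ ^ j * (2 * (a * ((1 - Γ) * a)) + ((m : R) - j) * ((1 - Γ) * a) ^ 2)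
      = (m * Γ * (1 - Γ) + Γ) * a ^ 2 := by
  rw [← pow_add_sum_Icc_lag_weights, add_mul, sum_mul]
  congr 1
  exact sum_congr rfl fun j _ => by ring

end Geometric

theorem optimal_weights_value_sensing_errors_general (N : ℕ) (hN : 2 ≤ N) (u Γ Pf Pm : ℝ) :
    Vtilde u Γ Pf Pm N (wstar Γ N)
      = u * (1 - u) * (1 + Γ) / ((N : ℝ) * (1 - Γ) + 2 * Γ)
        + (u * Pm * (1 - Pm) + (1 - u) * Pf * (1 - Pf)) / (1 - Pf - Pm) ^ 2 *
            ((2 + ((N : ℝ) - 2) * (1 - Γ) ^ 2) / ((N : ℝ) * (1 - Γ) + 2 * Γ) ^ 2) := by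
  obtain ⟨m, rfl⟩ : ∃ m, N = m + 2 := ⟨N - 2, by omega⟩
  obtain ⟨D, hD_def⟩ : ∃ D : ℝ, D = m * (1 - Γ) + 2 := ⟨_, rfl⟩
  have hD : ((m + 2 : ℕ) : ℝ) * (1 - Γ) + 2 * Γ = D := by rw [hD_def]; push_cast; ring
  have h0 : wstar Γ (m + 2) 0 = 1 / D := by
    rw [wstar, if_pos (by omega), hD]
  have hlast : wstar Γ (m + 2) (m + 1) = 1 / D := by
    rw [wstar, if_pos (by omega), hD]
  have hint : ∀ i, 0 < i → i ≤ m → wstar Γ (m + 2) i = (1 - Γ) * (1 / D) := fun i hi him => by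
    rw [wstar, if_neg (by omega), hD]
    ring
  have hD_cancel : (1 / D) ^ 2 * D = 1 / D := by
    rcases eq_or_ne D 0 with hD0 | hD0
    · simp [hD0]
    · field_simp
  rw [Vtilde, sum_range_sq_of_ends_interior h0 hlast hint,
    lagCorrelation_of_ends_interior Γ h0 hlast hint, lagCorrelation_of_geometric_profile, hD]
  push_cast
  linear_combination u * (1 - u) * (1 + Γ) * (hD_cancel - (1 / D) ^ 2 * hD_def)

/-- the value of the quadratic form `Ṽ` at the optimal weights. -/
theorem optimal_weights_value_sensing_errors (N : ℕ) (hN : 2 ≤ N) (u Γ Pf Pm : ℝ)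
    (hu : 0 < u) (hu1 : u < 1) (hΓ : Γ ∈ Set.Ioo (0 : ℝ) 1)
    (hPf : Pf ∈ Set.Icc (0 : ℝ) 1) (hPm : Pm ∈ Set.Icc (0 : ℝ) 1) (hPfm : Pf + Pm ≠ 1) :
    Vtilde u Γ Pf Pm N (wstar Γ N)
      = u * (1 - u) * (1 + Γ) / ((N : ℝ) * (1 - Γ) + 2 * Γ)
        + (u * Pm * (1 - Pm) + (1 - u) * Pf * (1 - Pf)) / (1 - Pf - Pm) ^ 2 *
            ((2 + ((N : ℝ) - 2) * (1 - Γ) ^ 2) / ((N : ℝ) * (1 - Γ) + 2 * Γ) ^ 2) :=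
  optimal_weights_value_sensing_errors_general N hN u Γ Pf Pm
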